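/- arXiv:2605.15996 — 2 statements merged into one kernel-verified Lean document; each statement's English description precedes it below -/
import Mathlib

section
/- Let T be a tree on n vertices with diameter D = max_{u,v} ℓ(u,v), where ℓ(u,v) is the number of vertices on the path from u to v. Let X₁,…,X_N be i.i.d. uniform vertices, ℓ̃(u,v) = |{i : Xᵢ ∈ \overline{uv}}|, and d* = max_{i,j} ℓ̃(Xᵢ,Xⱼ). If diam(T) < (1−δ)D' for some threshold D' and δ ∈ (0,1), then P(d*/N > (D'/n)(1−δ/2)) ≤ n² · exp(−3δ²ND'/(4n(6−5δ))). -/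
open MeasureTheory Real
open scoped Classical

/-!
For a fixed pair `u, v`, the number of samples falling on the `u`–`v` path is binomial with
success probability `p ≤ (1 - δ) D' / n`, because in a tree that path is unique and has fewer
than `(1 - δ) D'` vertices. The exponential Markov inequality at `λ = 3δ / (6 - 5δ)`, combined
with Bernstein's estimate `eˣ ≤ 1 + x + x² / (2 (1 - x / 3))`, bounds the probability that this
count exceeds `N (D' / n) (1 - δ / 2)` by `exp (-3δ²ND' / (4n(6 - 5δ)))`. Since `d*` is attained
at some pair of sampled vertices, a union bound over the `n²` pairs finishes the proof.
-/

open scoped ENNReal Finset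
open Finset Fintype

lemma apply_zero_le_of_hasDerivAt_nonneg {f f' : ℝ → ℝ} (hf : ∀ x, HasDerivAt f (f' x) x)
    (hf' : ∀ x, 0 ≤ x → 0 ≤ f' x) {x : ℝ} (hx : 0 ≤ x) : f 0 ≤ f x :=
  monotoneOn_of_hasDerivWithinAt_nonneg (convex_Ici 0)
    (fun y _ => (hf y).continuousAt.continuousWithinAt) (fun y _ => (hf y).hasDerivWithinAt)
    (fun y hy => hf' y (interior_subset hy)) Set.self_mem_Ici hx hx

lemma two_sub_mul_exp_le {x : ℝ} (hx : 0 ≤ x) : (2 - x) * exp x ≤ 2 + x := by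
  have key := apply_zero_le_of_hasDerivAt_nonneg (f := fun y => 2 + y - (2 - y) * exp y)
    (f' := fun y => 1 - (1 - y) * exp y) (fun y => ?_) (fun y _ => ?_) hx
  · simpa using key
  · exact (((hasDerivAt_id' y).const_add 2).sub
      (((hasDerivAt_id' y).const_sub 2).mul (hasDerivAt_exp y))).congr_deriv (by ring)
  · have h := mul_le_mul_of_nonneg_right (one_sub_le_exp_neg y) (exp_pos y).le
    rw [← exp_add, neg_add_cancel, exp_zero] at h
    linarith

/-- Bernstein's estimate `eˣ ≤ 1 + x + x² / (2 (1 - x / 3))`, cleared of denominators. -/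
lemma one_sub_div_three_mul_exp_le {x : ℝ} (hx : 0 ≤ x) :
    (1 - x / 3) * exp x ≤ 1 + 2 * x / 3 + x ^ 2 / 6 := by
  have key := apply_zero_le_of_hasDerivAt_nonneg
    (f := fun y => 1 + 2 * y / 3 + y ^ 2 / 6 - (1 - y / 3) * exp y)
    (f' := fun y => (2 + y - (2 - y) * exp y) / 3) (fun y => ?_) (fun y hy => ?_) hx
  · simpa using key
  · exact ((((hasDerivAt_id' y).const_mul 2).div_const 3).const_add 1 |>.add
      ((hasDerivAt_pow 2 y).div_const 6)).sub
      ((((hasDerivAt_id' y).div_const 3).const_sub 1).mul (hasDerivAt_exp y)) |>.congr_deriv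
      (by push_cast; ring)
  · linarith [two_sub_mul_exp_le hy]

lemma one_sub_mul_exp_sub_one_le {δ L : ℝ} (hδ : 5 * δ ≤ 6) (hL : 0 ≤ L)
    (hLδ : L * (6 - 5 * δ) = 3 * δ) : (1 - δ) * (exp L - 1) ≤ L * (1 - 3 * δ / 4) :=
  calc (1 - δ) * (exp L - 1) = (6 - 5 * δ) / 6 * ((1 - L / 3) * exp L) - (1 - δ) := by
        linear_combination (exp L / 18) * hLδ
    _ ≤ (6 - 5 * δ) / 6 * (1 + 2 * L / 3 + L ^ 2 / 6) - (1 - δ) := by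
        gcongr
        exact one_sub_div_three_mul_exp_le hL
    _ = L * (1 - 3 * δ / 4) := by linear_combination (L - 2) / 36 * hLδ

section Counting

variable {α : Type*} [Fintype α]

lemma card_filter_lt_le_exp_mul_sum (X : α → ℝ) (a : ℝ) {t : ℝ} (ht : 0 ≤ t) :
    (#{x | a < X x} : ℝ) ≤ exp (-(t * a)) * ∑ x, exp (t * X x) := by
  rw [mul_sum]
  calc (#{x | a < X x} : ℝ) = ∑ x ∈ {x | a < X x}, 1 := by simp
    _ ≤ ∑ x ∈ {x | a < X x}, exp (-(t * a)) * exp (t * X x) := by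
        gcongr with x hx
        rw [← exp_add, one_le_exp_iff]
        nlinarith [(mem_filter.1 hx).2]
    _ ≤ ∑ x, exp (-(t * a)) * exp (t * X x) :=
        sum_le_sum_of_subset_of_nonneg (subset_univ _) fun _ _ _ => by positivity

variable {ι V : Type*} [Fintype ι] [Fintype V]

lemma sum_exp_mul_card_filter_mem (A : Finset V) (t : ℝ) :
    ∑ f : ι → V, exp (t * #{i | f i ∈ A}) = (card V + #A * (exp t - 1)) ^ card ι := by
  have hfactor : ∀ f : ι → V, exp (t * #{i | f i ∈ A}) = ∏ i, if f i ∈ A then exp t else 1 := by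
    intro f
    rw [card_filter, Nat.cast_sum, mul_sum, exp_sum]
    congr 1 with i
    split_ifs <;> simp
  have hsum : ∑ v, (if v ∈ A then exp t else 1) = card V + #A * (exp t - 1) := by
    rw [sum_ite, filter_mem_eq_inter, filter_not, filter_mem_eq_inter, univ_inter,
      ← compl_eq_univ_sdiff]
    simp only [sum_const, card_compl, nsmul_eq_mul, mul_one, Nat.cast_sub (card_le_univ A)]
    ring
  simp_rw [hfactor]
  rw [← Fintype.prod_sum fun (_ : ι) (v : V) => if v ∈ A then exp t else 1, hsum, prod_const,
    card_univ]

lemma card_filter_lt_card_filter_mem_le_exp_mul_pow [Nonempty V] (A : Finset V) (a : ℝ) {t : ℝ} (ht : 0 ≤ t) :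
    (#{f : ι → V | a < #{i | f i ∈ A}} : ℝ) ≤
      exp (-(t * a) + card ι * (#A / card V * (exp t - 1))) * card V ^ card ι := by
  have hV : (0 : ℝ) < card V := by exact_mod_cast Fintype.card_pos
  have hx : 0 ≤ #A / card V * (exp t - 1) :=
    mul_nonneg (by positivity) (sub_nonneg.2 (one_le_exp ht))
  calc (#{f : ι → V | a < #{i | f i ∈ A}} : ℝ)
      ≤ exp (-(t * a)) * (card V + #A * (exp t - 1)) ^ card ι := by
        rw [← sum_exp_mul_card_filter_mem]
        exact card_filter_lt_le_exp_mul_sum _ a ht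
    _ = exp (-(t * a)) * card V ^ card ι * (1 + #A / card V * (exp t - 1)) ^ card ι := by
        rw [mul_assoc, ← mul_pow]
        field_simp
    _ ≤ exp (-(t * a)) * card V ^ card ι * exp (#A / card V * (exp t - 1)) ^ card ι := by
        gcongr
        linarith [add_one_le_exp (#A / card V * (exp t - 1))]
    _ = exp (-(t * a) + card ι * (#A / card V * (exp t - 1))) * card V ^ card ι := by
        rw [← exp_nat_mul, exp_add]
        ring

lemma measure_pi_uniformOfFintype_finset [Nonempty V] [MeasurableSpace V]
    [MeasurableSingletonClass V] (s : Finset (ι → V)) :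
    Measure.pi (fun _ : ι => (PMF.uniformOfFintype V).toMeasure) s =
      ENNReal.ofReal (#s / card V ^ card ι) := by
  rw [← sum_measure_singleton]
  simp only [Measure.pi_singleton, PMF.toMeasure_apply_singleton _ _ (measurableSet_singleton _),
    PMF.uniformOfFintype_apply, prod_const, card_univ, sum_const, nsmul_eq_mul]
  rw [ENNReal.ofReal_div_of_pos (by positivity), ENNReal.ofReal_pow (by positivity),
    ENNReal.ofReal_natCast, ENNReal.ofReal_natCast, div_eq_mul_inv, ENNReal.inv_pow]

lemma measure_lt_card_filter_mem_le_exp [Nonempty V] [MeasurableSpace V]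
    [MeasurableSingletonClass V] {δ D : ℝ} (hδ : δ ∈ Set.Ioo (0 : ℝ) 1) (A : Finset V)
    (hA : (#A : ℝ) ≤ (1 - δ) * D) :
    Measure.pi (fun _ : ι => (PMF.uniformOfFintype V).toMeasure)
        {f | card ι * (D / card V) * (1 - δ / 2) < #{i | f i ∈ A}} ≤
      ENNReal.ofReal (exp (-(3 * δ ^ 2 * card ι * D) / (4 * card V * (6 - 5 * δ)))) := by
  obtain ⟨hδ0, hδ1⟩ := hδ
  have hD : 0 ≤ D := nonneg_of_mul_nonneg_right ((Nat.cast_nonneg _).trans hA) (by linarith)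
  have h65 : 0 < 6 - 5 * δ := by linarith
  -- the exponential-moment parameter for which Bernstein's estimate yields the stated exponent
  set L := 3 * δ / (6 - 5 * δ) with hL
  have hLδ : L * (6 - 5 * δ) = 3 * δ := div_mul_cancel₀ _ h65.ne'
  have hm : #A / card V * (exp L - 1) ≤ D / card V * (L * (1 - 3 * δ / 4)) :=
    calc #A / card V * (exp L - 1) ≤ (1 - δ) * D / card V * (exp L - 1) := by
          have : 0 ≤ exp L - 1 := sub_nonneg.2 (one_le_exp (by positivity))
          gcongr
      _ = D / card V * ((1 - δ) * (exp L - 1)) := by ring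
      _ ≤ D / card V * (L * (1 - 3 * δ / 4)) :=
          mul_le_mul_of_nonneg_left
            (one_sub_mul_exp_sub_one_le (by linarith) (by positivity) hLδ) (by positivity)
  rw [← coe_filter_univ, measure_pi_uniformOfFintype_finset]
  apply ENNReal.ofReal_le_ofReal
  rw [div_le_iff₀ (by positivity)]
  refine (card_filter_lt_card_filter_mem_le_exp_mul_pow A _ (by positivity : 0 ≤ L)).trans ?_
  gcongr
  calc -(L * (card ι * (D / card V) * (1 - δ / 2))) + card ι * (#A / card V * (exp L - 1))
      ≤ -(L * (card ι * (D / card V) * (1 - δ / 2))) +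
          card ι * (D / card V * (L * (1 - 3 * δ / 4))) := by gcongr
    _ = -(3 * δ ^ 2 * card ι * D) / (4 * card V * (6 - 5 * δ)) := by
        rw [hL]; field_simp; ring

end Counting

namespace SimpleGraph

variable {V : Type*} [Fintype V]

/-- The vertex set `\overline{uv}` of the `u`–`v` path (of all such paths, in general). -/
noncomputable def pathVertices (G : SimpleGraph V) (u v : V) : Finset V :=
  {w | ∃ p : G.Walk u v, p.IsPath ∧ w ∈ p.support}

lemma IsAcyclic.card_pathVertices_le {G : SimpleGraph V} (hG : G.IsAcyclic) {u v : V}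
    {p : G.Walk u v} (hp : p.IsPath) : #(G.pathVertices u v) ≤ p.support.length := by
  refine (card_le_card fun w hw => ?_).trans (List.toFinset_card_le _)
  obtain ⟨q, hq, hwq⟩ := (mem_filter.1 hw).2
  have hqp : q = p := congrArg Subtype.val ((hG.subsingleton_path u v).elim ⟨q, hq⟩ ⟨p, hp⟩)
  exact List.mem_toFinset.2 (hqp ▸ hwq)

end SimpleGraph

lemma natCast_mul_lt_of_lt_div {c x : ℝ} {N : ℕ} (hc : 0 ≤ c) (h : c < x / N) : N * c < x := by
  rcases N.eq_zero_or_pos with rfl | hN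
  · rw [Nat.cast_zero, div_zero] at h
    linarith
  · rwa [← lt_div_iff₀' (by positivity)]

lemma Finset.exists_lt_of_lt_natCast_sup {ι : Type*} {s : Finset ι} {g : ι → ℕ} {a : ℝ}
    (ha : 0 ≤ a) (h : a < (s.sup g : ℕ)) : ∃ i ∈ s, a < g i := by
  rw [← Nat.floor_lt ha, Finset.lt_sup_iff] at h
  obtain ⟨i, hi, hlt⟩ := h
  exact ⟨i, hi, (Nat.floor_lt ha).1 hlt⟩

theorem stmt10_general {V : Type*} [Fintype V] [Nonempty V]
    [MeasurableSpace V] [MeasurableSingletonClass V]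
    (G : SimpleGraph V) (hG : G.IsTree)
    (n : ℕ) (hn : n = Fintype.card V)
    (D' : ℕ) (δ : ℝ) (hδ : δ ∈ Set.Ioo (0 : ℝ) 1)
    (hdiam : ∀ (u v : V) (p : G.Walk u v), p.IsPath →
      (p.support.length : ℝ) < (1 - δ) * D')
    (N : ℕ)
    (μ : Measure (Fin N → V))
    (hμ : μ = Measure.pi fun _ => (PMF.uniformOfFintype V).toMeasure)
    (lt : V → V → (Fin N → V) → ℕ)
    (hlt : ∀ (u v : V) (f : Fin N → V), lt u v f = (Finset.univ.filter fun i : Fin N =>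
        ∃ p : G.Walk u v, p.IsPath ∧ f i ∈ p.support).card)
    (dstar : (Fin N → V) → ℕ)
    (hdstar : ∀ f, dstar f =
      (Finset.univ : Finset (Fin N × Fin N)).sup fun ij => lt (f ij.1) (f ij.2) f) :
    μ {f | (dstar f : ℝ) / N > ((D' : ℝ) / n) * (1 - δ / 2)} ≤
      ENNReal.ofReal ((n : ℝ) ^ 2 *
        Real.exp (-(3 * δ ^ 2 * N * D') / (4 * n * (6 - 5 * δ)))) := by
  set a : ℝ := N * (D' / n) * (1 - δ / 2) with ha
  have hδ2 : 0 ≤ 1 - δ / 2 := by linarith [hδ.2]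
  have ha0 : 0 ≤ a := by positivity
  have hcover : {f : Fin N → V | (dstar f : ℝ) / N > D' / n * (1 - δ / 2)} ⊆
      ⋃ uv : V × V, {f | a < lt uv.1 uv.2 f} := fun f hf => by
    have hfa : a < dstar f := by
      rw [ha, mul_assoc]
      exact natCast_mul_lt_of_lt_div (by positivity) hf
    rw [hdstar] at hfa
    obtain ⟨ij, -, hij⟩ := Finset.exists_lt_of_lt_natCast_sup ha0 hfa
    exact Set.mem_iUnion.2 ⟨(f ij.1, f ij.2), hij⟩
  have hpair (u v : V) : μ {f | a < lt u v f} ≤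
      ENNReal.ofReal (exp (-(3 * δ ^ 2 * N * D') / (4 * n * (6 - 5 * δ)))) := by
    obtain ⟨p, hp, -⟩ := hG.existsUnique_path u v
    have hA : (#(G.pathVertices u v) : ℝ) ≤ (1 - δ) * D' :=
      (Nat.cast_le.2 (hG.isAcyclic.card_pathVertices_le hp)).trans (hdiam u v p hp).le
    have htail := measure_lt_card_filter_mem_le_exp (ι := Fin N) hδ _ hA
    rw [Fintype.card_fin, ← hn] at htail
    rw [hμ]
    convert htail using 2
    ext f
    simp [hlt, SimpleGraph.pathVertices, ha]
  calc μ {f | (dstar f : ℝ) / N > D' / n * (1 - δ / 2)}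
      ≤ ∑ uv : V × V, μ {f | a < lt uv.1 uv.2 f} :=
        (measure_mono hcover).trans (measure_iUnion_fintype_le _ _)
    _ ≤ card (V × V) • ENNReal.ofReal (exp (-(3 * δ ^ 2 * N * D') / (4 * n * (6 - 5 * δ)))) :=
        sum_le_card_nsmul _ _ _ fun uv _ => hpair uv.1 uv.2
    _ = _ := by
        rw [card_prod, ← hn, nsmul_eq_mul, ENNReal.ofReal_mul (by positivity), ← Nat.cast_pow,
          ENNReal.ofReal_natCast, ← sq]

/-- Let `T` be a tree on `n` vertices with `diam T < (1−δ)D'` (diameter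
counted in number of vertices of the longest path). With `X₁,…,X_N` i.i.d. uniform vertices,
`ℓ̃(u,v)` the number of sampled vertices on the path `u–v`, and
`d* = max_{i,j} ℓ̃(Xᵢ,Xⱼ)`, we have
`P(d*/N > (D'/n)(1−δ/2)) ≤ n² exp(−3δ²ND'/(4n(6−5δ)))`. -/
theorem stmt10 {V : Type*} [Fintype V] [DecidableEq V] [Nonempty V]
    [MeasurableSpace V] [MeasurableSingletonClass V]
    (G : SimpleGraph V) (hG : G.IsTree)
    (n : ℕ) (hn : n = Fintype.card V)
    (D' : ℕ) (hD' : 1 ≤ D') (δ : ℝ) (hδ : δ ∈ Set.Ioo (0 : ℝ) 1)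
    (hdiam : ∀ (u v : V) (p : G.Walk u v), p.IsPath →
      (p.support.length : ℝ) < (1 - δ) * D')
    (N : ℕ) (hN : 1 ≤ N)
    (μ : Measure (Fin N → V))
    (hμ : μ = Measure.pi fun _ => (PMF.uniformOfFintype V).toMeasure)
    (lt : V → V → (Fin N → V) → ℕ)
    (hlt : ∀ (u v : V) (f : Fin N → V), lt u v f = (Finset.univ.filter fun i : Fin N =>
        ∃ p : G.Walk u v, p.IsPath ∧ f i ∈ p.support).card)
    (dstar : (Fin N → V) → ℕ)
    (hdstar : ∀ f, dstar f =
      (Finset.univ : Finset (Fin N × Fin N)).sup fun ij => lt (f ij.1) (f ij.2) f) :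
    μ {f | (dstar f : ℝ) / N > ((D' : ℝ) / n) * (1 - δ / 2)} ≤
      ENNReal.ofReal ((n : ℝ) ^ 2 *
        Real.exp (-(3 * δ ^ 2 * N * D') / (4 * n * (6 - 5 * δ)))) :=
  stmt10_general G hG n hn D' δ hδ hdiam N μ hμ lt hlt dstar hdstar
end

section
/- Let T be a tree, X ⊆ V(T), and T_X the minimal subtree spanning X. Then for vertices u, v ∈ V(T_X), uv is an edge of T_X if and only if: (i) u and v both lie on \overline{xx'} for some x, x' ∈ X, and (ii) for every w with d(x,x') = d(x,w) + d(w,x'), either d(x,w) ≤ min{d(x,u), d(x,v)} or d(w,x') ≤ min{d(u,x'), d(v,x')}, where d is any tree metric on T. -/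
/-!
Along a path `p` from `x` to `x'`, the map `t ↦ d x t` is an injective coordinate with
`d s t = |d x s - d x t|`, and the vertices `w` with `d x x' = d x w + d w x'` are exactly those
of `p`. So condition (ii) says that no vertex of `p` lies strictly between `u` and `v`. On the other
hand `u` and `v` are adjacent iff no vertex lies metrically between them, and such a vertex would
lie on `p`, because `p` contains a walk from `u` to `v`. Finally every edge of a tree is a bridge,
so an edge joining two vertices of `p` is an edge of `p`.
-/

open SimpleGraph

theorem List.Sublist.sum_lt_sum {M : Type*} [AddCommMonoid M] [PartialOrder M]
    [IsOrderedCancelAddMonoid M] {l₁ l₂ : List M} (h : l₁.Sublist l₂)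
    (hlen : l₁.length < l₂.length) (hpos : ∀ a ∈ l₂, 0 < a) : l₁.sum < l₂.sum := by
  obtain ⟨l, hl⟩ := h.exists_perm_append
  have hl_ne : l ≠ [] := by
    rintro rfl
    simp [hl.length_eq] at hlen
  have hl_pos : 0 < l.sum :=
    l.sum_pos (fun a ha ↦ hpos a (hl.symm.subset (List.mem_append_right _ ha))) hl_ne
  rw [hl.sum_eq, List.sum_append]
  exact lt_add_of_pos_right _ hl_pos

theorem SimpleGraph.Walk.exists_walk_support_subset_edges_subset {V : Type*} {G : SimpleGraph V}
    {a b u v : V} (p : G.Walk a b) (hu : u ∈ p.support) (hv : v ∈ p.support) :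
    ∃ q : G.Walk u v, q.support ⊆ p.support ∧ q.edges ⊆ p.edges := by
  classical
  refine ⟨(p.takeUntil u hu).reverse.append (p.takeUntil v hv), ?_, ?_⟩
  · intro t ht
    simp only [Walk.support_append, Walk.support_reverse, List.mem_append, List.mem_reverse] at ht
    rcases ht with ht | ht
    · exact p.support_takeUntil_subset_support hu ht
    · exact p.support_takeUntil_subset_support hv (List.mem_of_mem_tail ht)
  · intro e he
    simp only [Walk.edges_append, Walk.edges_reverse, List.mem_append, List.mem_reverse] at he
    rcases he with he | he
    · exact p.edges_takeUntil_subset_edges hu he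
    · exact p.edges_takeUntil_subset_edges hv he

theorem SimpleGraph.IsAcyclic.mem_edges_iff_adj {V : Type*} {G : SimpleGraph V}
    (hG : G.IsAcyclic) {a b u v : V} (p : G.Walk a b) (hu : u ∈ p.support)
    (hv : v ∈ p.support) : s(u, v) ∈ p.edges ↔ G.Adj u v := by
  refine ⟨p.adj_of_mem_edges, fun huv ↦ ?_⟩
  obtain ⟨q, -, hq⟩ := p.exists_walk_support_subset_edges_subset hu hv
  exact hq (isBridge_iff_forall_walk_mem_edges.mp (isAcyclic_iff_forall_adj_isBridge.mp hG huv) q)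

structure IsTreeMetric {V : Type*} (G : SimpleGraph V) (ω : Sym2 V → ℝ) (d : V → V → ℝ) :
    Prop where
  isTree : G.IsTree
  weight_pos : ∀ e ∈ G.edgeSet, 0 < ω e
  dist_eq_sum : ∀ (u v : V) (p : G.Walk u v), p.IsPath → d u v = (p.edges.map ω).sum

namespace IsTreeMetric

variable {V : Type*} {G : SimpleGraph V} {ω : Sym2 V → ℝ} {d : V → V → ℝ}
  (hT : IsTreeMetric G ω d) {a b x x' u v w : V}

include hT

theorem weight_pos_of_mem_edges (p : G.Walk a b) : ∀ c ∈ p.edges.map ω, 0 < c := by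
  simp only [List.mem_map]
  rintro _ ⟨e, he, rfl⟩
  exact hT.weight_pos e (p.edges_subset_edgeSet he)

theorem dist_lt_sum_edges (p : G.Walk a b) (hp : ¬p.IsPath) : d a b < (p.edges.map ω).sum := by
  classical
  rw [hT.dist_eq_sum a b _ p.bypass_isPath]
  refine (p.edges_bypass_sublist_edges.map ω).sum_lt_sum ?_ (hT.weight_pos_of_mem_edges p)
  have hlen : p.bypass.length < p.length := by
    by_contra! h
    exact hp (p.bypass_eq_self_of_length_le_length_bypass h ▸ p.bypass_isPath)
  simpa using hlen

theorem dist_self (a : V) : d a a = 0 := by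
  simpa using hT.dist_eq_sum a a .nil .nil

theorem dist_pos (h : a ≠ b) : 0 < d a b := by
  obtain ⟨p, hp, -⟩ := hT.isTree.existsUnique_path a b
  rw [hT.dist_eq_sum a b p hp]
  exact List.sum_pos _ (hT.weight_pos_of_mem_edges p)
    (by simpa [Walk.edges_eq_nil] using p.not_nil_of_ne h)

theorem dist_nonneg (a b : V) : 0 ≤ d a b := by
  rcases eq_or_ne a b with rfl | h
  · exact (hT.dist_self a).ge
  · exact (hT.dist_pos h).le

theorem dist_comm (a b : V) : d a b = d b a := by
  obtain ⟨p, hp, -⟩ := hT.isTree.existsUnique_path a b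
  rw [hT.dist_eq_sum a b p hp, hT.dist_eq_sum b a p.reverse hp.reverse, Walk.edges_reverse,
    List.map_reverse, List.sum_reverse]

theorem dist_eq_add_of_mem_support {p : G.Walk a b} (hp : p.IsPath) (hw : w ∈ p.support) :
    d a b = d a w + d w b := by
  classical
  conv_lhs => rw [hT.dist_eq_sum a b p hp, ← p.take_spec hw]
  rw [Walk.edges_append, List.map_append, List.sum_append,
    hT.dist_eq_sum a w _ (hp.takeUntil hw), hT.dist_eq_sum w b _ (hp.dropUntil hw)]

/-- The paths `a ⟶ w ⟶ b` concatenate to a path (a walk that is not a path is strictly longer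
than `d a b`), hence to the path from `a` to `b`, which lies inside every walk from `a` to `b`. -/
theorem mem_support_of_dist_eq_add (p : G.Walk a b) (h : d a b = d a w + d w b) :
    w ∈ p.support := by
  classical
  obtain ⟨q, hq, -⟩ := hT.isTree.existsUnique_path a w
  obtain ⟨r, hr, -⟩ := hT.isTree.existsUnique_path w b
  have hqr : (q.append r).IsPath := by
    by_contra hqr
    have := hT.dist_lt_sum_edges _ hqr
    rw [Walk.edges_append, List.map_append, List.sum_append, ← hT.dist_eq_sum a w q hq,
      ← hT.dist_eq_sum w b r hr] at this
    linarith
  have hbypass : q.append r = p.bypass :=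
    (hT.isTree.existsUnique_path a b).unique hqr p.bypass_isPath
  exact p.support_bypass_subset_support
    (hbypass ▸ (q.mem_support_append_iff r).mpr (Or.inl q.end_mem_support))

theorem adj_iff_forall_dist_eq_add :
    G.Adj u v ↔ u ≠ v ∧ ∀ w, d u v = d u w + d w v → w = u ∨ w = v := by
  refine ⟨fun h ↦ ⟨h.ne, fun w hw ↦ ?_⟩, fun ⟨huv, h⟩ ↦ ?_⟩
  · simpa using hT.mem_support_of_dist_eq_add (h.toWalk) hw
  · obtain ⟨p, hp, -⟩ := hT.isTree.existsUnique_path u v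
    obtain ⟨y, huy, q, rfl⟩ := p.exists_eq_cons_of_ne huv
    rcases h y (hT.dist_eq_add_of_mem_support hp (by simp)) with rfl | rfl
    · exact (huy.ne rfl).elim
    · exact huy

theorem dist_eq_abs_sub {p : G.Walk x x'} (hp : p.IsPath) (hu : u ∈ p.support)
    (hv : v ∈ p.support) : d u v = |d x u - d x v| := by
  classical
  rw [← p.take_spec hu, Walk.mem_support_append_iff] at hv
  rcases hv with hv | hv
  · have := hT.dist_eq_add_of_mem_support (hp.takeUntil hu) hv
    rw [abs_of_nonneg (by linarith [hT.dist_nonneg v u]), hT.dist_comm u v]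
    linarith
  · have h₁ := hT.dist_eq_add_of_mem_support (hp.dropUntil hu) hv
    have h₂ := hT.dist_eq_add_of_mem_support hp hu
    have h₃ := hT.dist_eq_add_of_mem_support hp (p.support_dropUntil_subset_support hu hv)
    rw [abs_of_nonpos (by linarith [hT.dist_nonneg u v])]
    linarith

theorem eq_of_dist_eq {p : G.Walk x x'} (hp : p.IsPath) (hu : u ∈ p.support)
    (hv : v ∈ p.support) (h : d x u = d x v) : u = v := by
  by_contra huv
  have := hT.dist_pos huv
  rw [hT.dist_eq_abs_sub hp hu hv, h, sub_self, abs_zero] at this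
  exact this.false

theorem adj_iff_of_dist_lt {p : G.Walk x x'} (hp : p.IsPath) (hu : u ∈ p.support)
    (hv : v ∈ p.support) (huv : d x u < d x v) :
    G.Adj u v ↔ ∀ w, d x x' = d x w + d w x' →
      d x w ≤ min (d x u) (d x v) ∨ d w x' ≤ min (d u x') (d v x') := by
  have hux' := hT.dist_eq_add_of_mem_support hp hu
  have hvx' := hT.dist_eq_add_of_mem_support hp hv
  rw [min_eq_left huv.le, min_eq_right (by linarith), hT.adj_iff_forall_dist_eq_add]
  refine ⟨fun ⟨_, hbetween⟩ w hw ↦ ?_, fun h ↦ ⟨fun huv' ↦ ?_, fun w hw ↦ ?_⟩⟩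
  · have hwp := hT.mem_support_of_dist_eq_add p hw
    by_contra! hcon
    have : d u v = d u w + d w v := by
      rw [hT.dist_eq_abs_sub hp hu hv, hT.dist_eq_abs_sub hp hu hwp,
        hT.dist_eq_abs_sub hp hwp hv, abs_of_neg, abs_of_neg, abs_of_neg] <;> linarith
    rcases hbetween w this with rfl | rfl <;> linarith
  · exact (huv' ▸ huv).false
  · obtain ⟨q, hq, -⟩ := p.exists_walk_support_subset_edges_subset hu hv
    have hwp : w ∈ p.support := hq (hT.mem_support_of_dist_eq_add q hw)
    rw [hT.dist_eq_abs_sub hp hu hv, hT.dist_eq_abs_sub hp hu hwp,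
      hT.dist_eq_abs_sub hp hwp hv, abs_of_neg (sub_neg.mpr huv)] at hw
    rcases h w (hT.dist_eq_add_of_mem_support hp hwp) with h | h
    · left
      refine hT.eq_of_dist_eq hp hwp hu ?_
      linarith [le_abs_self (d x u - d x w), neg_abs_le (d x w - d x v)]
    · right
      refine hT.eq_of_dist_eq hp hwp hv ?_
      linarith [le_abs_self (d x w - d x v), neg_abs_le (d x u - d x w),
        hT.dist_eq_add_of_mem_support hp hwp]

theorem adj_iff_of_mem_support {p : G.Walk x x'} (hp : p.IsPath) (hu : u ∈ p.support)
    (hv : v ∈ p.support) (huv : u ≠ v) :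
    G.Adj u v ↔ ∀ w, d x x' = d x w + d w x' →
      d x w ≤ min (d x u) (d x v) ∨ d w x' ≤ min (d u x') (d v x') := by
  rcases lt_or_gt_of_ne (mt (hT.eq_of_dist_eq hp hu hv) huv) with h | h
  · exact hT.adj_iff_of_dist_lt hp hu hv h
  · simpa only [G.adj_comm, min_comm] using hT.adj_iff_of_dist_lt hp hv hu h

end IsTreeMetric

theorem stmt18_general {V : Type*} (G : SimpleGraph V) (hG : G.IsTree)
    (ω : Sym2 V → ℝ) (hω : ∀ e ∈ G.edgeSet, 0 < ω e)
    (d : V → V → ℝ)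
    (hd : ∀ (u v : V) (p : G.Walk u v), p.IsPath → d u v = (p.edges.map ω).sum)
    (X : Set V)
    (u v : V) (huv : u ≠ v) :
    (∃ x ∈ X, ∃ x' ∈ X, ∃ p : G.Walk x x', p.IsPath ∧ s(u, v) ∈ p.edges) ↔
      (∃ x ∈ X, ∃ x' ∈ X, ∃ p : G.Walk x x', p.IsPath ∧ u ∈ p.support ∧ v ∈ p.support ∧
        ∀ w : V, d x x' = d x w + d w x' →
          d x w ≤ min (d x u) (d x v) ∨ d w x' ≤ min (d u x') (d v x')) := by
  have hT : IsTreeMetric G ω d := ⟨hG, hω, hd⟩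
  constructor
  · rintro ⟨x, hx, x', hx', p, hp, he⟩
    have hu := p.fst_mem_support_of_mem_edges he
    have hv := p.snd_mem_support_of_mem_edges he
    exact ⟨x, hx, x', hx', p, hp, hu, hv,
      (hT.adj_iff_of_mem_support hp hu hv huv).mp (p.adj_of_mem_edges he)⟩
  · rintro ⟨x, hx, x', hx', p, hp, hu, hv, hbetween⟩
    exact ⟨x, hx, x', hx', p, hp, (hG.isAcyclic.mem_edges_iff_adj p hu hv).mpr
      ((hT.adj_iff_of_mem_support hp hu hv huv).mpr hbetween)⟩

/-- Let `T_X` be the minimal subtree spanning `X`, with tree metric `d`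
induced by positive edge weights. For distinct vertices `u, v` of `T_X`, `uv` is an edge of
`T_X` iff there exist `x, x' ∈ X` such that (i) `u` and `v` both lie on the path from `x` to
`x'`, and (ii) every `w` with `d x x' = d x w + d w x'` satisfies
`d x w ≤ min (d x u) (d x v)` or `d w x' ≤ min (d u x') (d v x')`. -/
theorem stmt18 {V : Type*} [Fintype V] (G : SimpleGraph V) (hG : G.IsTree)
    (ω : Sym2 V → ℝ) (hω : ∀ e ∈ G.edgeSet, 0 < ω e)
    (d : V → V → ℝ)
    (hd : ∀ (u v : V) (p : G.Walk u v), p.IsPath → d u v = (p.edges.map ω).sum)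
    (X : Set V)
    (VX : Set V)
    (hVX : VX = {w : V | ∃ x ∈ X, ∃ x' ∈ X, ∃ p : G.Walk x x', p.IsPath ∧ w ∈ p.support})
    (u v : V) (hu : u ∈ VX) (hv : v ∈ VX) (huv : u ≠ v) :
    (∃ x ∈ X, ∃ x' ∈ X, ∃ p : G.Walk x x', p.IsPath ∧ s(u, v) ∈ p.edges) ↔
      (∃ x ∈ X, ∃ x' ∈ X, ∃ p : G.Walk x x', p.IsPath ∧ u ∈ p.support ∧ v ∈ p.support ∧
        ∀ w : V, d x x' = d x w + d w x' →
          d x w ≤ min (d x u) (d x v) ∨ d w x' ≤ min (d u x') (d v x')) :=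
  stmt18_general G hG ω hω d hd X u v huv
end
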